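/- arXiv:2504.16842 — 4 statements merged into one kernel-verified Lean document; each statement's English description precedes it below -/
import Mathlib

section
/- Let 0 ≤ w ≤ u < v̄ ≤ 1 with v̄ − u ≤ 1, let 0 < εgap < 1, and let p ∈ (0,1). Set v^p := w + εgap and suppose u ≤ v^p ≤ v̄ − (1−p)(v̄−u) and v^p − w ≤ 1. Then ((v^p − u)(v^p − w) + v̄ − v^p)/((1−p)(v̄ − u)) − 1 ≥ εgap/(1−p) − 1. -/
open Set

theorem stmt9 (w u vbar εgap p : ℝ)
    (h1 : 0 ≤ w) (h2 : w ≤ u) (h3 : u < vbar) (h4 : vbar ≤ 1)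
    (h4' : vbar - u ≤ 1) (h5 : 0 < εgap) (h6 : εgap < 1)
    (hp : p ∈ Ioo (0:ℝ) 1)
    (hle1 : u ≤ w + εgap) (hle2 : w + εgap ≤ vbar - (1 - p) * (vbar - u))
    (hle3 : (w + εgap) - w ≤ 1) :
    ((w + εgap - u) * (w + εgap - w) + vbar - (w + εgap)) /
        ((1 - p) * (vbar - u)) - 1 ≥
      εgap / (1 - p) - 1 := by
  obtain ⟨hp0, hp1⟩ := hp
  have hd : 0 < (1 - p) * (vbar - u) := by nlinarith
  rw [ge_iff_le, sub_le_sub_iff_right, div_le_div_iff₀ (by linarith) hd]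
  nlinarith [mul_nonneg (mul_nonneg (by nlinarith : (0:ℝ) ≤ vbar - (w + εgap)) (by linarith : (0:ℝ) ≤ 1 - εgap)) (by linarith : (0:ℝ) ≤ 1 - p)]
end

section
/- Every Bertrand allocation is a core allocation. Precisely: let A = {(f_i(v), w_i(v))}_{v ∈ [0,1], i = 1,2} be an allocation such that for almost all v ∈ [0,1]: f₁(v)+f₂(v) = f(v), and w_i(v) = v whenever f_i(v) > 0. Then there is no firm j and alternative allocation Ã_j for j that blocks A. -/
open MeasureTheory Set

/-- An allocation for the two-firm economy with worker density `f`. -/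
structure Alloc (f : ℝ → ℝ) where
  fd : Fin 2 → ℝ → ℝ
  wage : Fin 2 → ℝ → ℝ
  fd_meas : ∀ i, Measurable (fd i)
  wage_meas : ∀ i, Measurable (wage i)
  fd_nonneg : ∀ i v, 0 ≤ fd i v
  fd_le : ∀ i v, fd i v ≤ f v
  sum_le : ∀ v, fd 0 v + fd 1 v ≤ f v
  wage_nonneg : ∀ i v, 0 ≤ wage i v
  wage_zero : ∀ i v, fd i v = 0 → wage i v = 0
  wage_mono : ∀ i ⦃u v : ℝ⦄, u ≤ v → 0 < fd i u → 0 < fd i v → wage i u ≤ wage i v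

/-- An (alternative) allocation for a single firm. -/
structure FirmAlloc (f : ℝ → ℝ) where
  fd : ℝ → ℝ
  wage : ℝ → ℝ
  fd_meas : Measurable fd
  wage_meas : Measurable wage
  fd_nonneg : ∀ v, 0 ≤ fd v
  fd_le : ∀ v, fd v ≤ f v
  wage_nonneg : ∀ v, 0 ≤ wage v
  wage_zero : ∀ v, fd v = 0 → wage v = 0
  wage_mono : ∀ ⦃u v : ℝ⦄, u ≤ v → 0 < fd u → 0 < fd v → wage u ≤ wage v

/-- Firm `i`'s profit under allocation `A`. -/
noncomputable def profit {f : ℝ → ℝ} (A : Alloc f) (i : Fin 2) : ℝ :=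
  ∫ v in Icc (0:ℝ) 1, (v - A.wage i v) * A.fd i v

/-- Firm profit under a single-firm allocation. -/
noncomputable def profitF {f : ℝ → ℝ} (B : FirmAlloc f) : ℝ :=
  ∫ v in Icc (0:ℝ) 1, (v - B.wage v) * B.fd v

/-- Firm `j` blocks allocation `A` via the alternative allocation `B`. -/
def Blocks (f : ℝ → ℝ) (A : Alloc f) (j : Fin 2) (B : FirmAlloc f) : Prop :=
  profitF B > profit A j ∧
  ∀ᵐ v ∂(volume : Measure ℝ), v ∈ Icc (0:ℝ) 1 →
    ((B.wage v ≥ A.wage j v ∧ B.wage v > A.wage (1 - j) v) ∨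
     (B.wage v ≥ A.wage j v ∧ B.fd v + A.fd (1 - j) v ≤ f v) ∨
     (B.wage v > A.wage (1 - j) v ∧ B.fd v + A.fd j v ≤ f v) ∨
     (B.fd v + A.fd j v + A.fd (1 - j) v ≤ f v))

/-- Bertrand allocation: full employment and wage equal to productivity a.e. -/
def IsBertrand {f : ℝ → ℝ} (A : Alloc f) : Prop :=
  ∀ᵐ v ∂(volume : Measure ℝ), v ∈ Icc (0:ℝ) 1 →
    (A.fd 0 v + A.fd 1 v = f v ∧ ∀ i, 0 < A.fd i v → A.wage i v = v)

theorem stmt10 (f : ℝ → ℝ) (f_lo f_hi : ℝ) (h_lo : 0 < f_lo)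
    (hf : ∀ v ∈ Icc (0:ℝ) 1, f_lo ≤ f v ∧ f v ≤ f_hi)
    (A : Alloc f) (hA : IsBertrand A) :
    ∀ (j : Fin 2) (B : FirmAlloc f), ¬ Blocks f A j B := by
  intro j B hB
  obtain ⟨hgt, hae⟩ := hB
  have hm : MeasurableSet (Icc (0:ℝ) 1) := measurableSet_Icc
  have hA' : ∀ᵐ v ∂((volume : Measure ℝ).restrict (Icc (0:ℝ) 1)),
      (A.fd 0 v + A.fd 1 v = f v ∧ ∀ i, 0 < A.fd i v → A.wage i v = v) :=
    (ae_restrict_iff' hm).2 hA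
  have hae' : ∀ᵐ v ∂((volume : Measure ℝ).restrict (Icc (0:ℝ) 1)),
      ((B.wage v ≥ A.wage j v ∧ B.wage v > A.wage (1 - j) v) ∨
       (B.wage v ≥ A.wage j v ∧ B.fd v + A.fd (1 - j) v ≤ f v) ∨
       (B.wage v > A.wage (1 - j) v ∧ B.fd v + A.fd j v ≤ f v) ∨
       (B.fd v + A.fd j v + A.fd (1 - j) v ≤ f v)) :=
    (ae_restrict_iff' hm).2 hae
  have h0 : profit A j = 0 := by
    unfold profit
    apply integral_eq_zero_of_ae
    filter_upwards [hA'] with v hv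
    simp only [Pi.zero_apply]
    rcases eq_or_lt_of_le (A.fd_nonneg j v) with h | h
    · rw [← h, mul_zero]
    · rw [hv.2 j h, sub_self, zero_mul]
  have hle : profitF B ≤ 0 := by
    unfold profitF
    apply integral_nonpos_of_ae
    filter_upwards [hA', hae', ae_restrict_mem hm] with v hv hc hvmem
    simp only [Pi.zero_apply]
    rcases eq_or_lt_of_le (B.fd_nonneg v) with h | h
    · rw [← h, mul_zero]
    · have hfv : 0 < f v := lt_of_lt_of_le h_lo (hf v hvmem).1
      have hsum : A.fd j v + A.fd (1 - j) v = f v := by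
        fin_cases j
        · simpa using hv.1
        · simpa [add_comm] using hv.1
      have hone : 0 < A.fd j v ∨ 0 < A.fd (1 - j) v := by
        by_contra hcon
        push_neg at hcon
        have h1 := le_antisymm hcon.1 (A.fd_nonneg j v)
        have h2 := le_antisymm hcon.2 (A.fd_nonneg (1 - j) v)
        rw [h1, h2] at hsum
        linarith
      have hwB : v ≤ B.wage v := by
        rcases hc with ⟨h1, h2⟩ | ⟨h1, h2⟩ | ⟨h1, h2⟩ | h4
        · rcases hone with hp | hp
          · rw [hv.2 j hp] at h1; exact h1
          · rw [hv.2 (1 - j) hp] at h2; exact h2.le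
        · have hp : 0 < A.fd j v := by linarith
          rw [hv.2 j hp] at h1; exact h1
        · have hp : 0 < A.fd (1 - j) v := by linarith
          rw [hv.2 (1 - j) hp] at h1; exact h1.le
        · linarith
      exact mul_nonpos_of_nonpos_of_nonneg (by linarith) (B.fd_nonneg v)
  linarith [hgt, h0, hle]
end

section
/- In any blocking allocation against a Bertrand allocation, the profit integrand is almost everywhere nonpositive. Precisely: let A satisfy f₁(v)+f₂(v) = f(v) and (f_i(v) > 0 ⟹ w_i(v) = v) for almost all v, and suppose Ã_j = {(f̃_j, w̃_j)} satisfies, for almost all v, one of the four blocking conditions (listed in the context). Then (v − w̃_j(v))·f̃_j(v) ≤ 0 for almost all v, and hence ∫₀¹ (v − w̃_j(v)) f̃_j(v) dv ≤ 0. -/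
open MeasureTheory Set

theorem stmt12 (f : ℝ → ℝ) (hfpos : ∀ v ∈ Icc (0:ℝ) 1, 0 < f v)
    (A : Alloc f) (hA : IsBertrand A) (j : Fin 2) (B : FirmAlloc f)
    (hB : ∀ᵐ v ∂(volume : Measure ℝ), v ∈ Icc (0:ℝ) 1 →
      ((B.wage v ≥ A.wage j v ∧ B.wage v > A.wage (1 - j) v) ∨
       (B.wage v ≥ A.wage j v ∧ B.fd v + A.fd (1 - j) v ≤ f v) ∨
       (B.wage v > A.wage (1 - j) v ∧ B.fd v + A.fd j v ≤ f v) ∨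
       (B.fd v + A.fd j v + A.fd (1 - j) v ≤ f v))) :
    (∀ᵐ v ∂(volume : Measure ℝ), v ∈ Icc (0:ℝ) 1 →
      (v - B.wage v) * B.fd v ≤ 0) ∧ profitF B ≤ 0 := by
  have key : ∀ᵐ v ∂(volume : Measure ℝ), v ∈ Icc (0:ℝ) 1 →
      (v - B.wage v) * B.fd v ≤ 0 := by
    filter_upwards [hA, hB] with v hA' hB' hv
    obtain ⟨hsum, hw⟩ := hA' hv
    have hsum' : A.fd j v + A.fd (1 - j) v = f v := by
      fin_cases j <;> simpa [add_comm] using hsum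
    have hf : 0 < f v := hfpos v hv
    have hfdB := B.fd_nonneg v
    -- helper: if B.wage v ≥ v then product ≤ 0
    have done : v ≤ B.wage v → (v - B.wage v) * B.fd v ≤ 0 := fun h =>
      mul_nonpos_of_nonpos_of_nonneg (by linarith) hfdB
    rcases hB' hv with ⟨h1, h2⟩ | ⟨h1, h2⟩ | ⟨h1, h2⟩ | h
    · -- some firm has positive density, so its wage is v
      rcases lt_or_ge 0 (A.fd j v) with hj | hj
      · have := hw j hj; exact done (by linarith)
      · have hj' : 0 < A.fd (1 - j) v := by
          have := A.fd_nonneg j v; linarith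
        have := hw (1 - j) hj'; exact done (by linarith)
    · rcases eq_or_lt_of_le hfdB with h0 | h0
      · simp [← h0]
      · have hj : 0 < A.fd j v := by linarith
        have := hw j hj; exact done (by linarith)
    · rcases eq_or_lt_of_le hfdB with h0 | h0
      · simp [← h0]
      · have hj : 0 < A.fd (1 - j) v := by linarith
        have := hw (1 - j) hj; exact done (by linarith)
    · have h0 : B.fd v = 0 := by linarith
      simp [h0]
  refine ⟨key, ?_⟩
  have hmeas : MeasurableSet (Icc (0:ℝ) 1) := measurableSet_Icc
  have : ∀ᵐ v ∂((volume : Measure ℝ).restrict (Icc (0:ℝ) 1)),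
      (v - B.wage v) * B.fd v ≤ 0 := (ae_restrict_iff' hmeas).2 key
  exact integral_nonpos_of_ae this
end

section
/- If an allocation A has a firm j and a positive-measure set V ⊆ [0,1] with w_j(v) > v for all v ∈ V, then A is blocked: the allocation Ã_j that sets f̃_j(v) = 0 and w̃_j(v) = 0 for v ∈ V and agrees with A_j elsewhere satisfies the blocking conditions and yields π_j(Ã_j) > π_j(A_j). In particular, π_j(Ã_j) − π_j(A_j) = ∫_V (w_j(v) − v) f_j(v) dv ≥ 0, with strict inequality provided μ({v ∈ V : f_j(v) > 0}) > 0. -/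
open MeasureTheory Set

theorem stmt13 (f : ℝ → ℝ) (A : Alloc f) (j : Fin 2) (V : Set ℝ)
    (hVsub : V ⊆ Icc (0:ℝ) 1) (hVmeas : MeasurableSet V) (hVpos : 0 < volume V)
    (hover : ∀ v ∈ V, A.wage j v > v)
    (hposhired : 0 < volume {v ∈ V | 0 < A.fd j v})
    (hint : IntegrableOn (fun v => (v - A.wage j v) * A.fd j v) (Icc (0:ℝ) 1)) :
    ∃ B : FirmAlloc f,
      (∀ v ∈ V, B.fd v = 0 ∧ B.wage v = 0) ∧
      (∀ v ∉ V, B.fd v = A.fd j v ∧ B.wage v = A.wage j v) ∧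
      Blocks f A j B ∧
      profitF B - profit A j = ∫ v in V, (A.wage j v - v) * A.fd j v ∧
      0 ≤ ∫ v in V, (A.wage j v - v) * A.fd j v := by
  classical
  set gA := fun v => (v - A.wage j v) * A.fd j v with hgA
  let B : FirmAlloc f :=
    { fd := fun v => if v ∈ V then 0 else A.fd j v
      wage := fun v => if v ∈ V then 0 else A.wage j v
      fd_meas := Measurable.ite hVmeas measurable_const (A.fd_meas j)
      wage_meas := Measurable.ite hVmeas measurable_const (A.wage_meas j)
      fd_nonneg := by
        intro v; by_cases h : v ∈ V <;> simp [h, A.fd_nonneg j v]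
      fd_le := by
        intro v; by_cases h : v ∈ V
        · simp only [h, if_true]
          exact le_trans (A.fd_nonneg j v) (A.fd_le j v)
        · simp [h, A.fd_le j v]
      wage_nonneg := by
        intro v; by_cases h : v ∈ V <;> simp [h, A.wage_nonneg j v]
      wage_zero := by
        intro v hv; by_cases h : v ∈ V
        · simp [h]
        · simp only [h, if_false] at hv ⊢
          exact A.wage_zero j v hv
      wage_mono := by
        intro u v huv hu hv
        by_cases h : u ∈ V
        · simp [h] at hu
        · by_cases h' : v ∈ V
          · simp [h'] at hv
          · simp only [h, h', if_false] at hu hv ⊢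
            exact A.wage_mono j huv hu hv }
  have key : profitF B - profit A j = ∫ v in V, (A.wage j v - v) * A.fd j v := by
    have hIcc : Icc (0:ℝ) 1 = V ∪ (Icc (0:ℝ) 1 \ V) := by
      rw [union_diff_cancel hVsub]
    have hintV : IntegrableOn gA V volume := hint.mono_set hVsub
    have hintD : IntegrableOn gA (Icc (0:ℝ) 1 \ V) volume :=
      hint.mono_set diff_subset
    have hgB : ∀ v, (v - B.wage v) * B.fd v = (if v ∈ V then 0 else gA v) := by
      intro v; by_cases h : v ∈ V <;> simp [B, h, hgA]
    have hdisj : Disjoint V (Icc (0:ℝ) 1 \ V) := disjoint_sdiff_right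
    have hBint : IntegrableOn (fun v => if v ∈ V then 0 else gA v) V volume := by
      apply Integrable.congr (integrable_zero _ _ _)
      filter_upwards [ae_restrict_mem hVmeas] with v hv
      simp [hv]
    have hBintD : IntegrableOn (fun v => if v ∈ V then 0 else gA v)
        (Icc (0:ℝ) 1 \ V) volume := by
      apply hintD.congr_fun ?_ (measurableSet_Icc.diff hVmeas)
      intro v hv; simp [hv.2]
    have e1 : profitF B = ∫ v in Icc (0:ℝ) 1, (if v ∈ V then 0 else gA v) := by
      simp only [profitF]
      exact setIntegral_congr_fun measurableSet_Icc fun v _ => hgB v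
    rw [e1]
    have e2 : (∫ v in Icc (0:ℝ) 1, (if v ∈ V then 0 else gA v)) =
        (∫ v in V, (if v ∈ V then 0 else gA v)) +
        ∫ v in Icc (0:ℝ) 1 \ V, (if v ∈ V then 0 else gA v) := by
      conv_lhs => rw [hIcc]
      exact setIntegral_union hdisj (measurableSet_Icc.diff hVmeas) hBint hBintD
    have e3 : profit A j = (∫ v in V, gA v) + ∫ v in Icc (0:ℝ) 1 \ V, gA v := by
      simp only [profit, ← hgA]
      conv_lhs => rw [hIcc]
      exact setIntegral_union hdisj (measurableSet_Icc.diff hVmeas) hintV hintD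
    have e4 : (∫ v in V, (if v ∈ V then 0 else gA v)) = 0 := by
      rw [setIntegral_congr_fun hVmeas (g := fun _ => (0:ℝ)) fun v hv => by simp [hv]]
      simp
    have e5 : (∫ v in Icc (0:ℝ) 1 \ V, (if v ∈ V then 0 else gA v)) =
        ∫ v in Icc (0:ℝ) 1 \ V, gA v :=
      setIntegral_congr_fun (measurableSet_Icc.diff hVmeas)
        fun v hv => by simp [hv.2]
    rw [e2, e3, e4, e5]
    have e6 : (∫ v in V, (A.wage j v - v) * A.fd j v) = - ∫ v in V, gA v := by
      rw [← integral_neg]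
      exact setIntegral_congr_fun hVmeas fun v _ => by simp [hgA]; ring
    rw [e6]; ring
  have hnn : 0 ≤ ∫ v in V, (A.wage j v - v) * A.fd j v := by
    apply setIntegral_nonneg hVmeas
    intro v hv
    exact mul_nonneg (by linarith [hover v hv]) (A.fd_nonneg j v)
  have hpos : 0 < ∫ v in V, (A.wage j v - v) * A.fd j v := by
    set h := fun v => (A.wage j v - v) * A.fd j v with hh
    set V' := {v ∈ V | 0 < A.fd j v} with hV'
    have hV'meas : MeasurableSet V' :=
      hVmeas.inter ((A.fd_meas j) measurableSet_Ioi)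
    have hV'sub : V' ⊆ V := fun v hv => hv.1
    have hinth : IntegrableOn h V volume := by
      have : IntegrableOn (fun v => -gA v) V volume := (hint.mono_set hVsub).neg
      exact this.congr_fun (fun v _ => by simp [hh, hgA]; ring) hVmeas
    have hinthV' : IntegrableOn h V' volume := hinth.mono_set hV'sub
    have hposV' : ∀ v ∈ V', 0 < h v := by
      intro v hv
      exact mul_pos (by linarith [hover v hv.1]) hv.2
    have h1 : 0 < ∫ v in V', h v := by
      rw [setIntegral_pos_iff_support_of_nonneg_ae ?_ hinthV']
      · have hsupp : V' ⊆ Function.support h := fun v hv => (hposV' v hv).ne'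
        rw [Set.inter_eq_right.mpr hsupp]
        exact hposhired
      · filter_upwards [ae_restrict_mem hV'meas] with v hv
        exact (hposV' v hv).le
    have h2 : (∫ v in V', h v) ≤ ∫ v in V, h v := by
      apply setIntegral_mono_set hinth ?_ (HasSubset.Subset.eventuallyLE hV'sub)
      filter_upwards [ae_restrict_mem hVmeas] with v hv
      exact mul_nonneg (by linarith [hover v hv]) (A.fd_nonneg j v)
    exact lt_of_lt_of_le h1 h2
  refine ⟨B, fun v hv => by simp [B, hv], fun v hv => by simp [B, hv],
    ⟨by linarith, ?_⟩, key, hnn⟩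
  apply Filter.Eventually.of_forall
  intro v _
  by_cases h : v ∈ V
  · right; right; right
    show B.fd v + _ + _ ≤ _
    simp only [B, h, if_true]
    have := A.sum_le v
    fin_cases j <;> simpa [add_comm] using this
  · right; left
    show B.wage v ≥ _ ∧ B.fd v + _ ≤ _
    simp only [B, h, if_false]
    refine ⟨le_refl _, ?_⟩
    have := A.sum_le v
    fin_cases j <;> simpa [add_comm] using this
end
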